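/- arXiv:1204.2148 — 3 statements merged into one kernel-verified Lean document; each statement's English description precedes it below -/
import Mathlib

section
/- In the algebra C^∞(S^7_θ) generated by z_1,…,z_4, z_1*,…,z_4* with relations z_j z_l = η_{lj} z_l z_j, z_j z_l* = η_{jl} z_l* z_j, where η is the matrix with entries 1 on the 2×2 diagonal blocks and μ = e^{iπθ}, μ̄ in the off-diagonal blocks as specified, and sphere relation Σ_j z_j* z_j = 1, the elements x_1 = 2(z_1 z_3* + z_2* z_4), x_2 = 2(z_2 z_3* − z_1* z_4), x_0 = z_1 z_1* + z_2 z_2* − z_3 z_3* − z_4 z_4* satisfy x_1 x_2 = λ x_2 x_1 with λ = e^{2πiθ}, x_0 is central among x_0, x_1, x_2, x_1*, x_2*, and x_1* x_1 + x_2* x_2 + x_0^2 = 1. -/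
/-!
Give `z_j` the degree `r_j ∈ ℤ²` and `z_j*` the degree `-r_j`. The defining relations say exactly
that any two generators commute up to the bicharacter `ε(p, q) = μ^(p₂q₁ - p₁q₂)`, and then so do
any two homogeneous elements. Now `x₀` has degree `0`, hence is central among homogeneous
elements, while `x₁` and `x₂` have degrees `(1, -1)` and `(-1, -1)`, and
`ε((1, -1), (-1, -1)) = μ² = λ`.

For the sphere relation put `s = z₁* z₁ + z₂* z₂` and `t = z₃ z₃* + z₄* z₄`. The generators are normal
and `s`, `t` have degree `0`, so `x₀ = s - t`, `s + t = 1`, and expanding `x₁* x₁ + x₂* x₂` the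
cross terms cancel because `z₁` and `z₂` commute, leaving `4st`. Hence
`x₁* x₁ + x₂* x₂ + x₀² = 4st + (s - t)² = (s + t)² = 1`.
-/

/-- The deformation matrix `η` of the θ-deformed 7-sphere, with `μ = e^{iπθ}`. -/
noncomputable def etaMatrix (θ : ℝ) : Matrix (Fin 4) (Fin 4) ℂ :=
  let μ : ℂ := Complex.exp (Real.pi * Complex.I * θ)
  let μb : ℂ := (starRingEnd ℂ) μ
  !![1, 1, μ, μb; 1, 1, μb, μ; μb, μ, 1, 1; μ, μb, 1, 1]

section QCommute

variable {k R : Type*} [CommSemiring k] [Semiring R] [Algebra k R]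

def QCommute (c : k) (a b : R) : Prop := a * b = c • (b * a)

namespace QCommute

variable {a a' b b' : R} {c c' : k}

theorem mul_left (h : QCommute c a b) (h' : QCommute c' a' b) :
    QCommute (c * c') (a * a') b := by
  unfold QCommute at *
  rw [mul_assoc, h', mul_smul_comm, ← mul_assoc, h, smul_mul_assoc, smul_smul, mul_comm c',
    mul_assoc]

theorem mul_right (h : QCommute c a b) (h' : QCommute c' a b') :
    QCommute (c * c') a (b * b') := by
  unfold QCommute at *
  rw [← mul_assoc, h, smul_mul_assoc, mul_assoc, h', mul_smul_comm, smul_smul, mul_assoc]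

theorem add_left (h : QCommute c a b) (h' : QCommute c a' b) : QCommute c (a + a') b := by
  unfold QCommute at *
  rw [add_mul, h, h', ← smul_add, mul_add]

theorem add_right (h : QCommute c a b) (h' : QCommute c a b') : QCommute c a (b + b') := by
  unfold QCommute at *
  rw [mul_add, h, h', ← smul_add, add_mul]

theorem smul_left (h : QCommute c a b) (c' : k) : QCommute c (c' • a) b := by
  unfold QCommute at *
  rw [smul_mul_assoc, h, mul_smul_comm, smul_comm]

theorem smul_right (h : QCommute c a b) (c' : k) : QCommute c a (c' • b) := by
  unfold QCommute at *
  rw [mul_smul_comm, h, smul_mul_assoc, smul_comm]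

theorem symm (h : QCommute c a b) (hc : c' * c = 1) : QCommute c' b a := by
  unfold QCommute at *
  rw [h, smul_smul, hc, one_smul]

theorem commute (h : QCommute (1 : k) a b) : Commute a b := by
  unfold QCommute at h
  rwa [one_smul] at h

theorem star [StarRing k] [StarRing R] [StarModule k R] (h : QCommute c a b) :
    QCommute (star c) (star b) (star a) := by
  unfold QCommute at *
  rw [← star_mul, h, star_smul, star_mul]

end QCommute

end QCommute

/-- The `k`-linear combinations of monomials of degree `d` (and length at least one) in the
letters `x i`, the letter `x i` having degree `deg i`. -/
inductive IsHomogeneousIn (k : Type*) {R ι G : Type*} [SMul k R] [Mul R] [Add R] [Add G]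
    (x : ι → R) (deg : ι → G) : G → R → Prop
  | gen (i : ι) : IsHomogeneousIn k x deg (deg i) (x i)
  | mul {d e : G} {a b : R} : IsHomogeneousIn k x deg d a → IsHomogeneousIn k x deg e b →
      IsHomogeneousIn k x deg (d + e) (a * b)
  | add {d : G} {a b : R} : IsHomogeneousIn k x deg d a → IsHomogeneousIn k x deg d b →
      IsHomogeneousIn k x deg d (a + b)
  | smul {d : G} {a : R} (c : k) : IsHomogeneousIn k x deg d a →
      IsHomogeneousIn k x deg d (c • a)

namespace IsHomogeneousIn

variable {k R ι G : Type*} {x : ι → R} {deg : ι → G} {d e : G} {a b : R}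

theorem gen_mul_gen [SMul k R] [Mul R] [Add R] [Add G] (i j : ι) (h : deg i + deg j = d) :
    IsHomogeneousIn k x deg d (x i * x j) :=
  h ▸ (gen i).mul (gen j)

theorem sub [CommRing k] [Ring R] [Algebra k R] [Add G]
    (ha : IsHomogeneousIn k x deg d a) (hb : IsHomogeneousIn k x deg d b) :
    IsHomogeneousIn k x deg d (a - b) := by
  simpa [sub_eq_add_neg] using ha.add (hb.smul (-1))

theorem star [CommSemiring k] [StarRing k] [Semiring R] [StarRing R] [Algebra k R]
    [StarModule k R] [AddGroup G] {σ : ι → ι} (hσ : ∀ i, star (x i) = x (σ i))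
    (hdeg : ∀ i, deg (σ i) = -deg i) (ha : IsHomogeneousIn k x deg d a) :
    IsHomogeneousIn k x deg (-d) (star a) := by
  induction ha with
  | gen i => rw [hσ, ← hdeg]; exact gen (σ i)
  | mul _ _ ih ih' => rw [star_mul, neg_add_rev]; exact ih'.mul ih
  | add _ _ ih ih' => rw [star_add]; exact ih.add ih'
  | smul c _ ih => rw [star_smul]; exact ih.smul _

theorem qcommute [CommSemiring k] [Semiring R] [Algebra k R] [Add G] {ε : G → G → k}
    (hε_left : ∀ d d' e, ε (d + d') e = ε d e * ε d' e)
    (hε_right : ∀ d e e', ε d (e + e') = ε d e * ε d e')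
    (hx : ∀ i j, QCommute (ε (deg i) (deg j)) (x i) (x j))
    (ha : IsHomogeneousIn k x deg d a) (hb : IsHomogeneousIn k x deg e b) :
    QCommute (ε d e) a b := by
  have hgen (i : ι) : QCommute (ε (deg i) e) (x i) b := by
    induction hb with
    | gen j => exact hx i j
    | mul _ _ ih ih' => rw [hε_right]; exact ih.mul_right ih'
    | add _ _ ih ih' => exact ih.add_right ih'
    | smul c _ ih => exact ih.smul_right c
  induction ha with
  | gen i => exact hgen i
  | mul _ _ ih ih' => rw [hε_left]; exact ih.mul_left ih'
  | add _ _ ih ih' => exact ih.add_left ih'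
  | smul c _ ih => exact ih.smul_left c

end IsHomogeneousIn

theorem star_mul_self_add_star_mul_self_of_commute {R : Type*} [Ring R] [StarRing R]
    {z₀ z₁ z₂ z₃ : R} (h₀₁ : Commute z₀ z₁) [IsStarNormal z₀] [IsStarNormal z₁]
    (h₂ : Commute (star z₀ * z₀ + star z₁ * z₁) z₂)
    (h₃ : Commute (star z₀ * z₀ + star z₁ * z₁) (star z₃)) :
    star (z₀ * star z₂ + star z₁ * z₃) * (z₀ * star z₂ + star z₁ * z₃)
      + star (z₁ * star z₂ - star z₀ * z₃) * (z₁ * star z₂ - star z₀ * z₃)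
      = (star z₀ * z₀ + star z₁ * z₁) * (z₂ * star z₂ + star z₃ * z₃) := by
  set s := star z₀ * z₀ + star z₁ * z₁
  calc _ = z₂ * s * star z₂ + star z₃ * (z₁ * star z₁ + z₀ * star z₀) * z₃
        + z₂ * (star z₀ * star z₁ - star z₁ * star z₀) * z₃
        + star z₃ * (z₁ * z₀ - z₀ * z₁) * star z₂ := by
          simp only [s, star_add, star_sub, star_mul, star_star]; noncomm_ring
    _ = z₂ * s * star z₂ + star z₃ * s * z₃ := by
          rw [h₀₁.eq, h₀₁.star_star.eq, sub_self, sub_self, ← star_comm_self' z₀,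
            ← star_comm_self' z₁]
          simp only [s]; noncomm_ring
    _ = s * (z₂ * star z₂ + star z₃ * z₃) := by
          rw [← h₂.eq, ← h₃.eq, mul_add, mul_assoc, mul_assoc]

theorem Commute.four_mul_add_sub_sq {R : Type*} [Ring R] {s t : R} (h : Commute s t) :
    4 * (s * t) + (s - t) ^ 2 = (s + t) ^ 2 := by
  rw [h.add_sq, h.sub_sq]
  noncomm_ring

section SphereTwist

open Complex

noncomputable def sphereTwist (θ : ℝ) (p q : ℤ × ℤ) : ℂ :=
  exp (Real.pi * I * θ * (p.2 * q.1 - p.1 * q.2))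

variable {θ : ℝ} {p p' q q' : ℤ × ℤ}

theorem sphereTwist_add_left : sphereTwist θ (p + p') q = sphereTwist θ p q * sphereTwist θ p' q := by
  simp only [sphereTwist, ← exp_add, Prod.fst_add, Prod.snd_add]
  push_cast
  ring_nf

theorem sphereTwist_add_right : sphereTwist θ p (q + q') = sphereTwist θ p q * sphereTwist θ p q' := by
  simp only [sphereTwist, ← exp_add, Prod.fst_add, Prod.snd_add]
  push_cast
  ring_nf

theorem sphereTwist_zero_left : sphereTwist θ 0 q = 1 := by
  simp [sphereTwist]

theorem sphereTwist_neg_left_self : sphereTwist θ (-p) p = 1 := by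
  simp [sphereTwist, mul_comm]

theorem sphereTwist_neg_right : sphereTwist θ p (-q) = sphereTwist θ q p := by
  simp only [sphereTwist, Prod.fst_neg, Prod.snd_neg]
  push_cast
  ring_nf

theorem star_sphereTwist : star (sphereTwist θ p q) = sphereTwist θ q p := by
  simp only [sphereTwist, Complex.star_def, ← exp_conj, map_mul, map_sub, conj_ofReal, conj_I,
    map_intCast]
  ring_nf

end SphereTwist

/-- The paper's degrees `r₁, …, r₄`; the generator `z j` is the paper's `z_{j+1}`. -/
def sphereWeight : Fin 4 → ℤ × ℤ := ![(1, 0), (-1, 0), (0, 1), (0, -1)]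

theorem etaMatrix_apply (θ : ℝ) (j l : Fin 4) :
    etaMatrix θ j l = sphereTwist θ (sphereWeight l) (sphereWeight j) := by
  have hconj : (starRingEnd ℂ) (Complex.exp (Real.pi * Complex.I * θ)) =
      Complex.exp (-(Real.pi * Complex.I * θ)) := by
    rw [← Complex.exp_conj]; simp
  fin_cases j <;> fin_cases l <;> simp [etaMatrix, sphereTwist, sphereWeight, hconj]

def sphereLetter {R : Type*} [Star R] (z : Fin 4 → R) : Fin 4 ⊕ Fin 4 → R :=
  Sum.elim z (fun j => star (z j))

def sphereDeg : Fin 4 ⊕ Fin 4 → ℤ × ℤ := Sum.elim sphereWeight (fun j => -sphereWeight j)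

theorem star_sphereLetter {R : Type*} [InvolutiveStar R] (z : Fin 4 → R) (u : Fin 4 ⊕ Fin 4) :
    star (sphereLetter z u) = sphereLetter z u.swap := by
  rcases u with j | j <;> simp [sphereLetter]

theorem sphereDeg_swap (u : Fin 4 ⊕ Fin 4) : sphereDeg u.swap = -sphereDeg u := by
  rcases u with j | j <;> simp [sphereDeg]

section Sphere

variable {R : Type*} [Ring R] [Algebra ℂ R] [StarRing R] {θ : ℝ} {z : Fin 4 → R}

theorem isHomogeneousIn_sphere_gen (j : Fin 4) :
    IsHomogeneousIn ℂ (sphereLetter z) sphereDeg (sphereWeight j) (z j) :=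
  .gen (Sum.inl j)

theorem isHomogeneousIn_sphere_star_gen (j : Fin 4) :
    IsHomogeneousIn ℂ (sphereLetter z) sphereDeg (-sphereWeight j) (star (z j)) :=
  .gen (Sum.inr j)

theorem isHomogeneousIn_star_mul_self (j : Fin 4) :
    IsHomogeneousIn ℂ (sphereLetter z) sphereDeg 0 (star (z j) * z j) :=
  .gen_mul_gen (Sum.inr j) (Sum.inl j) (neg_add_cancel _)

theorem isHomogeneousIn_mul_star_self (j : Fin 4) :
    IsHomogeneousIn ℂ (sphereLetter z) sphereDeg 0 (z j * star (z j)) :=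
  .gen_mul_gen (Sum.inl j) (Sum.inr j) (add_neg_cancel _)

variable [StarModule ℂ R]

theorem sphereLetter_qcommute
    (hcomm : ∀ j l : Fin 4, z j * z l = etaMatrix θ l j • (z l * z j))
    (hcomm' : ∀ j l : Fin 4, z j * star (z l) = etaMatrix θ j l • (star (z l) * z j))
    (u v : Fin 4 ⊕ Fin 4) :
    QCommute (sphereTwist θ (sphereDeg u) (sphereDeg v)) (sphereLetter z u) (sphereLetter z v) := by
  rcases u with j | j <;> rcases v with l | l <;>
    simp only [sphereDeg, sphereLetter, Sum.elim_inl, Sum.elim_inr, sphereTwist_neg_right]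
  · rw [← etaMatrix_apply]; exact hcomm j l
  · rw [← etaMatrix_apply]; exact hcomm' j l
  · refine QCommute.symm (c := sphereTwist θ (sphereWeight j) (sphereWeight l)) ?_ ?_
    · rw [← etaMatrix_apply]; exact hcomm' l j
    · rw [← sphereTwist_add_left, neg_add_cancel, sphereTwist_zero_left]
  · have := (show QCommute _ (z l) (z j) from hcomm l j).star
    rwa [etaMatrix_apply, star_sphereTwist] at this

theorem qcommute_of_sphere_homogeneous
    (hcomm : ∀ j l : Fin 4, z j * z l = etaMatrix θ l j • (z l * z j))
    (hcomm' : ∀ j l : Fin 4, z j * star (z l) = etaMatrix θ j l • (star (z l) * z j))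
    {d e : ℤ × ℤ} {a b : R}
    (ha : IsHomogeneousIn ℂ (sphereLetter z) sphereDeg d a)
    (hb : IsHomogeneousIn ℂ (sphereLetter z) sphereDeg e b) :
    QCommute (sphereTwist θ d e) a b :=
  ha.qcommute (fun _ _ _ => sphereTwist_add_left) (fun _ _ _ => sphereTwist_add_right)
    (sphereLetter_qcommute hcomm hcomm') hb

theorem commute_of_sphere_homogeneous_zero
    (hcomm : ∀ j l : Fin 4, z j * z l = etaMatrix θ l j • (z l * z j))
    (hcomm' : ∀ j l : Fin 4, z j * star (z l) = etaMatrix θ j l • (star (z l) * z j))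
    {e : ℤ × ℤ} {a b : R}
    (ha : IsHomogeneousIn ℂ (sphereLetter z) sphereDeg 0 a)
    (hb : IsHomogeneousIn ℂ (sphereLetter z) sphereDeg e b) :
    Commute a b := by
  have := qcommute_of_sphere_homogeneous hcomm hcomm' ha hb
  rw [sphereTwist_zero_left] at this
  exact this.commute

theorem isStarNormal_of_sphere
    (hcomm : ∀ j l : Fin 4, z j * z l = etaMatrix θ l j • (z l * z j))
    (hcomm' : ∀ j l : Fin 4, z j * star (z l) = etaMatrix θ j l • (star (z l) * z j))
    (j : Fin 4) : IsStarNormal (z j) := by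
  have := sphereLetter_qcommute hcomm hcomm' (Sum.inr j) (Sum.inl j)
  rw [sphereDeg, Sum.elim_inr, Sum.elim_inl, sphereTwist_neg_left_self] at this
  exact ⟨this.commute⟩

theorem sphere_relation
    (hcomm : ∀ j l : Fin 4, z j * z l = etaMatrix θ l j • (z l * z j))
    (hcomm' : ∀ j l : Fin 4, z j * star (z l) = etaMatrix θ j l • (star (z l) * z j))
    (hsphere : ∑ j, star (z j) * z j = 1) {x1 x2 x0 : R}
    (hx1 : x1 = (2 : ℂ) • (z 0 * star (z 2) + star (z 1) * z 3))
    (hx2 : x2 = (2 : ℂ) • (z 1 * star (z 2) - star (z 0) * z 3))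
    (hx0 : x0 = z 0 * star (z 0) + z 1 * star (z 1) - z 2 * star (z 2) - z 3 * star (z 3)) :
    star x1 * x1 + star x2 * x2 + x0 ^ 2 = 1 := by
  have hnormal := isStarNormal_of_sphere hcomm hcomm'
  have := hnormal 0
  have := hnormal 1
  have hst : star (z 0) * z 0 + star (z 1) * z 1 + (z 2 * star (z 2) + star (z 3) * z 3) = 1 := by
    rw [← hsphere, Fin.sum_univ_four, (hnormal 2).star_comm_self.eq]; abel
  have hx0' :
      x0 = star (z 0) * z 0 + star (z 1) * z 1 - (z 2 * star (z 2) + star (z 3) * z 3) := by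
    rw [hx0, (hnormal 0).star_comm_self.eq, (hnormal 1).star_comm_self.eq,
      (hnormal 3).star_comm_self.eq]; abel
  have hs := (isHomogeneousIn_star_mul_self 0).add (isHomogeneousIn_star_mul_self (z := z) 1)
  have ht := (isHomogeneousIn_mul_star_self 2).add (isHomogeneousIn_star_mul_self (z := z) 3)
  have h₀₁ : Commute (z 0) (z 1) := by
    have := qcommute_of_sphere_homogeneous hcomm hcomm' (isHomogeneousIn_sphere_gen 0)
      (isHomogeneousIn_sphere_gen 1)
    norm_num [sphereTwist, sphereWeight] at this
    exact this.commute
  have hx12 : star x1 * x1 + star x2 * x2 = 4 *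
      ((star (z 0) * z 0 + star (z 1) * z 1) * (z 2 * star (z 2) + star (z 3) * z 3)) := by
    rw [hx1, hx2]
    simp only [star_smul, smul_mul_smul_comm, ← smul_add]
    rw [star_mul_self_add_star_mul_self_of_commute h₀₁
      (commute_of_sphere_homogeneous_zero hcomm hcomm' hs (isHomogeneousIn_sphere_gen 2))
      (commute_of_sphere_homogeneous_zero hcomm hcomm' hs (isHomogeneousIn_sphere_star_gen 3))]
    norm_num [ofNat_smul_eq_nsmul (R := ℂ), nsmul_eq_mul]
  rw [hx12, hx0', (commute_of_sphere_homogeneous_zero hcomm hcomm' hs ht).four_mul_add_sub_sq,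
    hst, one_pow]

end Sphere

theorem stmt4 {R : Type*} [Ring R] [Algebra ℂ R] [StarRing R] [StarModule ℂ R]
    (θ : ℝ) (z : Fin 4 → R)
    (hcomm : ∀ j l : Fin 4, z j * z l = etaMatrix θ l j • (z l * z j))
    (hcomm' : ∀ j l : Fin 4, z j * star (z l) = etaMatrix θ j l • (star (z l) * z j))
    (hsphere : ∑ j, star (z j) * z j = 1)
    (x1 x2 x0 : R)
    (hx1 : x1 = (2 : ℂ) • (z 0 * star (z 2) + star (z 1) * z 3))
    (hx2 : x2 = (2 : ℂ) • (z 1 * star (z 2) - star (z 0) * z 3))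
    (hx0 : x0 = z 0 * star (z 0) + z 1 * star (z 1)
      - z 2 * star (z 2) - z 3 * star (z 3))
    (lam : ℂ) (hlam : lam = Complex.exp (2 * Real.pi * Complex.I * θ)) :
    x1 * x2 = lam • (x2 * x1) ∧
    (x0 * x1 = x1 * x0 ∧ x0 * x2 = x2 * x0 ∧
      x0 * star x1 = star x1 * x0 ∧ x0 * star x2 = star x2 * x0) ∧
    star x1 * x1 + star x2 * x2 + x0 ^ 2 = 1 := by
  have h1 : IsHomogeneousIn ℂ (sphereLetter z) sphereDeg (1, -1) x1 :=
    hx1 ▸ ((IsHomogeneousIn.gen_mul_gen (Sum.inl 0) (Sum.inr 2) (by decide)).add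
      (IsHomogeneousIn.gen_mul_gen (Sum.inr 1) (Sum.inl 3) (by decide))).smul 2
  have h2 : IsHomogeneousIn ℂ (sphereLetter z) sphereDeg (-1, -1) x2 :=
    hx2 ▸ ((IsHomogeneousIn.gen_mul_gen (Sum.inl 1) (Sum.inr 2) (by decide)).sub
      (IsHomogeneousIn.gen_mul_gen (Sum.inr 0) (Sum.inl 3) (by decide))).smul 2
  have h0 : IsHomogeneousIn ℂ (sphereLetter z) sphereDeg 0 x0 :=
    hx0 ▸ (((isHomogeneousIn_mul_star_self 0).add (isHomogeneousIn_mul_star_self 1)).sub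
      (isHomogeneousIn_mul_star_self 2)).sub (isHomogeneousIn_mul_star_self 3)
  have hcentral {e : ℤ × ℤ} {b : R} (hb : IsHomogeneousIn ℂ (sphereLetter z) sphereDeg e b) :
      x0 * b = b * x0 :=
    (commute_of_sphere_homogeneous_zero hcomm hcomm' h0 hb).eq
  have hstar {d : ℤ × ℤ} {a : R} (ha : IsHomogeneousIn ℂ (sphereLetter z) sphereDeg d a) :=
    ha.star (star_sphereLetter z) sphereDeg_swap
  refine ⟨?_, ⟨hcentral h1, hcentral h2, hcentral (hstar h1), hcentral (hstar h2)⟩,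
    sphere_relation hcomm hcomm' hsphere hx1 hx2 hx0⟩
  have hlam' : sphereTwist θ (1, -1) (-1, -1) = lam := by
    rw [hlam, sphereTwist]; push_cast; ring_nf
  exact hlam' ▸ qcommute_of_sphere_homogeneous hcomm hcomm' h1 h2
end

section
/- Let u be the 4×2 matrix with entries from C^∞(S^7_θ), u = [[z_1, −z_2*],[z_2, z_1*],[z_3, −z_4*],[z_4, z_3*]]. Then the sphere relation z_1*z_1 + z_2*z_2 + z_3*z_3 + z_4*z_4 = 1 together with the deformed commutation relations implies u* u = 1 (the 2×2 identity), and consequently p := u u* is a projection: p^2 = p = p*. -/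
open scoped Matrix

theorem etaMatrix_apply_eq_one (θ : ℝ) {j l : Fin 4} (h : j.val / 2 = l.val / 2) :
    etaMatrix θ j l = 1 := by
  fin_cases j <;> fin_cases l <;> simp_all [etaMatrix]

theorem Matrix.isIdempotentElem_mul_conjTranspose_of_conjTranspose_mul_self_eq_one
    {m n α : Type*} [Fintype m] [Fintype n] [DecidableEq n] [Semiring α] [StarRing α]
    {u : Matrix m n α} (hu : uᴴ * u = 1) : IsIdempotentElem (u * uᴴ) := by
  rw [IsIdempotentElem, Matrix.mul_assoc, ← Matrix.mul_assoc uᴴ, hu, Matrix.one_mul]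

theorem conjTranspose_mul_self_eq_one_of_normal_of_commute {R : Type*} [Ring R] [StarRing R]
    {a b c d : R} (hab : Commute a b) (hcd : Commute c d) [IsStarNormal a] [IsStarNormal b]
    [IsStarNormal c] [IsStarNormal d]
    (hsphere : star a * a + star b * b + star c * c + star d * d = 1) :
    (!![a, -star b; b, star a; c, -star d; d, star c])ᴴ *
      !![a, -star b; b, star a; c, -star d; d, star c] = 1 := by
  ext i j
  fin_cases i <;> fin_cases j <;> simp [Matrix.mul_apply, Fin.sum_univ_four]
  · exact hsphere
  · rw [hab.star_star.eq, hcd.star_star.eq]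
    abel
  · rw [hab.eq, hcd.eq]
    abel
  · rw [← star_comm_self' a, ← star_comm_self' b, ← star_comm_self' c, ← star_comm_self' d,
      ← hsphere]
    abel

theorem stmt5_general {R : Type*} [Ring R] [Algebra ℂ R] [StarRing R]
    (θ : ℝ) (z : Fin 4 → R)
    (hcomm : ∀ j l : Fin 4, z j * z l = etaMatrix θ l j • (z l * z j))
    (hcomm' : ∀ j l : Fin 4, z j * star (z l) = etaMatrix θ j l • (star (z l) * z j))
    (hsphere : ∑ j, star (z j) * z j = 1)
    (u : Matrix (Fin 4) (Fin 2) R)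
    (hu : u = !![z 0, -star (z 1); z 1, star (z 0);
                 z 2, -star (z 3); z 3, star (z 2)]) :
    u.conjTranspose * u = 1 ∧
    (u * u.conjTranspose) * (u * u.conjTranspose) = u * u.conjTranspose ∧
    (u * u.conjTranspose).conjTranspose = u * u.conjTranspose := by
  have hnormal (j : Fin 4) : IsStarNormal (z j) :=
    ⟨Eq.symm (by simpa [etaMatrix_apply_eq_one θ rfl] using hcomm' j j)⟩
  have hcommute {j l : Fin 4} (h : j.val / 2 = l.val / 2) : Commute (z j) (z l) := by
    have hjl := hcomm j l
    rwa [etaMatrix_apply_eq_one θ h.symm, one_smul] at hjl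
  have hunitary : uᴴ * u = 1 := hu ▸
    conjTranspose_mul_self_eq_one_of_normal_of_commute (hcommute (j := 0) (l := 1) rfl)
      (hcommute (j := 2) (l := 3) rfl) (by simpa [Fin.sum_univ_four] using hsphere)
  exact ⟨hunitary,
    Matrix.isIdempotentElem_mul_conjTranspose_of_conjTranspose_mul_self_eq_one hunitary,
    Matrix.isHermitian_mul_conjTranspose_self u⟩

theorem stmt5 {R : Type*} [Ring R] [Algebra ℂ R] [StarRing R] [StarModule ℂ R]
    (θ : ℝ) (z : Fin 4 → R)
    (hcomm : ∀ j l : Fin 4, z j * z l = etaMatrix θ l j • (z l * z j))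
    (hcomm' : ∀ j l : Fin 4, z j * star (z l) = etaMatrix θ j l • (star (z l) * z j))
    (hsphere : ∑ j, star (z j) * z j = 1)
    (u : Matrix (Fin 4) (Fin 2) R)
    (hu : u = !![z 0, -star (z 1); z 1, star (z 0);
                 z 2, -star (z 3); z 3, star (z 2)]) :
    u.conjTranspose * u = 1 ∧
    (u * u.conjTranspose) * (u * u.conjTranspose) = u * u.conjTranspose ∧
    (u * u.conjTranspose).conjTranspose = u * u.conjTranspose :=
  stmt5_general θ z hcomm hcomm' hsphere u hu
end

section
/- Consider a complex of Hilbert spaces 0 → H⁰ →^{d₀} H¹ →^{d₁} H² → 0 with d₁ ∘ d₀ = 0, where d₀ and d₁ are bounded Fredholm operators. Then the cohomology groups H^i (i = 0,1,2) are finite-dimensional, the operator d₀* + d₁ : H¹ → H⁰ ⊕ H² is Fredholm, and its index equals −h⁰ + h¹ − h², where h^i = dim H^i. -/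
/-- A bounded operator between normed spaces is Fredholm if it has
finite-dimensional kernel, closed range, and finite-dimensional cokernel. -/
def IsFredholmOp {X Y : Type*} [NormedAddCommGroup X] [NormedSpace ℂ X]
    [NormedAddCommGroup Y] [NormedSpace ℂ Y] (T : X →L[ℂ] Y) : Prop :=
  FiniteDimensional ℂ (LinearMap.ker (T : X →ₗ[ℂ] Y)) ∧
  IsClosed ((LinearMap.range (T : X →ₗ[ℂ] Y) : Submodule ℂ Y) : Set Y) ∧
  FiniteDimensional ℂ (Y ⧸ LinearMap.range (T : X →ₗ[ℂ] Y))

/-!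
The kernel of `D = d₀† × d₁` is `(range d₀)ᗮ ⊓ ker d₁`, the orthogonal complement of the closed
subspace `range d₀` inside `ker d₁`, hence a copy of `H¹`. Since `range d₀` is closed, the range of
`d₀†` is all of `(ker d₀)ᗮ`; and the two components of `D` can be prescribed independently, because
`ker d₀† = (range d₀)ᗮ ⊇ (ker d₁)ᗮ` and `ker d₁ ⊔ (ker d₁)ᗮ = ⊤`. So `range D = (ker d₀)ᗮ × range d₁`
is closed and `coker D ≃ ker d₀ × coker d₁`, which gives the index `h¹ - h⁰ - h²`.
-/

open scoped InnerProduct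

namespace ContinuousLinearMap

section Hilbert

variable {𝕜 E F : Type*} [RCLike 𝕜]
  [NormedAddCommGroup E] [InnerProductSpace 𝕜 E] [CompleteSpace E]
  [NormedAddCommGroup F] [InnerProductSpace 𝕜 F] [CompleteSpace F]

/- `T` factors as `range ↪ F ∘ S ∘ (projection onto (ker T)ᗮ)` with `S : (ker T)ᗮ → range T` an
isomorphism of Hilbert spaces, so `T† = ((ker T)ᗮ ↪ E) ∘ S† ∘ (projection onto range T)` and `S†`
is onto. -/
theorem range_adjoint_of_isClosed_range (T : E →L[𝕜] F) (hT : IsClosed (T.range : Set F)) :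
    T†.range = T.kerᗮ := by
  refine le_antisymm (T.orthogonal_ker ▸ Submodule.le_topologicalClosure _) fun w hw => ?_
  have : CompleteSpace T.range := hT.completeSpace_coe
  have hT_proj (x : E) : T (T.kerᗮ.orthogonalProjectionOnto x) = T x := by
    have hx : T (T.ker.starProjection x) = 0 := T.ker.starProjection_apply_mem x
    rw [Submodule.orthogonalProjectionOnto_orthogonal, map_sub, hx, sub_zero]
  let S : T.kerᗮ →L[𝕜] T.range :=
    (T ∘L T.kerᗮ.subtypeL).codRestrict T.range fun x => ⟨x, rfl⟩
  have hS_inj : S.ker = ⊥ := by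
    refine LinearMap.ker_eq_bot'.mpr fun x hx => Subtype.ext ?_
    exact T.ker.orthogonal_disjoint.le_bot ⟨congrArg Subtype.val hx, x.2⟩
  have hS_surj : S.range = ⊤ := by
    refine eq_top_iff.mpr fun ⟨_, x, hx⟩ _ => ⟨T.kerᗮ.orthogonalProjectionOnto x, ?_⟩
    exact Subtype.ext ((hT_proj x).trans hx)
  have hT_eq : T = T.range.subtypeL ∘L S ∘L T.kerᗮ.orthogonalProjectionOnto := by
    ext x
    exact (hT_proj x).symm
  have hT_adj : T† = T.kerᗮ.subtypeL ∘L S† ∘L T.range.orthogonalProjectionOnto := by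
    conv_lhs => rw [hT_eq]
    simp only [adjoint_comp, Submodule.adjoint_subtypeL, Submodule.adjoint_orthogonalProjectionOnto,
      comp_assoc]
  let e := ContinuousLinearEquiv.ofBijective S hS_inj hS_surj
  have hS_adj : S† ∘L (e.symm : T.range →L[𝕜] T.kerᗮ)† = .id 𝕜 _ := by
    rw [← adjoint_comp]
    convert adjoint_id (𝕜 := 𝕜) (E := T.kerᗮ)
    ext x
    simp [e]
  obtain ⟨u, hu⟩ : ∃ u : T.range, (S†) u = ⟨w, hw⟩ :=
    ⟨_, congr($hS_adj ⟨w, hw⟩)⟩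
  refine ⟨u, ?_⟩
  rw [hT_adj]
  simp [hu]

end Hilbert

section Complex

variable {𝕜 E₀ E₁ E₂ : Type*} [RCLike 𝕜]
  [NormedAddCommGroup E₀] [InnerProductSpace 𝕜 E₀] [CompleteSpace E₀]
  [NormedAddCommGroup E₁] [InnerProductSpace 𝕜 E₁] [CompleteSpace E₁]
  [NormedAddCommGroup E₂] [NormedSpace 𝕜 E₂]

theorem range_adjoint_prod_of_range_le_ker {d₀ : E₀ →L[𝕜] E₁} {d₁ : E₁ →L[𝕜] E₂}
    (hd : d₀.range ≤ d₁.ker) (hd₀ : IsClosed (d₀.range : Set E₁)) :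
    (d₀†.prod d₁).range = d₀.kerᗮ.prod d₁.range := by
  rw [range_prod_eq, range_adjoint_of_isClosed_range d₀ hd₀]
  rw [← orthogonal_range, eq_top_iff, ← d₁.ker.sup_orthogonal_of_hasOrthogonalProjection, sup_comm]
  exact sup_le_sup_right (Submodule.orthogonal_le hd) _

end Complex

end ContinuousLinearMap

namespace Submodule

variable {R M N : Type*} [Ring R] [AddCommGroup M] [Module R M] [AddCommGroup N] [Module R N]

noncomputable def quotientProdEquiv (p : Submodule R M) (q : Submodule R N) :
    ((M × N) ⧸ p.prod q) ≃ₗ[R] (M ⧸ p) × (N ⧸ q) :=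
  (quotEquivOfEq _ _ (by rw [LinearMap.ker_prodMap, ker_mkQ, ker_mkQ])).trans
    ((p.mkQ.prodMap q.mkQ).quotKerEquivOfSurjective
      (Prod.map_surjective.mpr ⟨p.mkQ_surjective, q.mkQ_surjective⟩))

variable {𝕜 E : Type*} [RCLike 𝕜] [NormedAddCommGroup E] [InnerProductSpace 𝕜 E]

noncomputable def orthogonalInfEquivQuotientComap (K N : Submodule 𝕜 E)
    [K.HasOrthogonalProjection] (h : K ≤ N) :
    ↥(Kᗮ ⊓ N) ≃ₗ[𝕜] N ⧸ K.comap N.subtype := by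
  refine LinearEquiv.ofBijective ((K.comap N.subtype).mkQ ∘ₗ inclusion inf_le_right) ⟨?_, ?_⟩
  · refine LinearMap.ker_eq_bot.mp (eq_bot_iff.mpr fun x hx => ?_)
    have hxK : (x : E) ∈ K := (Quotient.mk_eq_zero (K.comap N.subtype)).mp hx
    exact Subtype.ext (K.orthogonal_disjoint.le_bot ⟨hxK, x.2.1⟩)
  · intro q
    obtain ⟨n, rfl⟩ := (K.comap N.subtype).mkQ_surjective q
    obtain ⟨k, hk, m, hm, hkm⟩ :=
      mem_sup.mp ((K.sup_orthogonal_inf_of_hasOrthogonalProjection h).ge n.2)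
    refine ⟨⟨m, hm⟩, (Quotient.eq _).mpr ?_⟩
    have : m - n = -k := by rw [← hkm]; abel
    simpa [this] using hk

end Submodule

open ContinuousLinearMap Submodule

theorem stmt17 {H0 H1 H2 : Type*}
    [NormedAddCommGroup H0] [InnerProductSpace ℂ H0] [CompleteSpace H0]
    [NormedAddCommGroup H1] [InnerProductSpace ℂ H1] [CompleteSpace H1]
    [NormedAddCommGroup H2] [InnerProductSpace ℂ H2] [CompleteSpace H2]
    (d0 : H0 →L[ℂ] H1) (d1 : H1 →L[ℂ] H2)
    (hcx : d1.comp d0 = 0)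
    (hd0 : IsFredholmOp d0) (hd1 : IsFredholmOp d1)
    (D : H1 →L[ℂ] H0 × H2)
    (hD : D = (ContinuousLinearMap.adjoint d0).prod d1) :
    FiniteDimensional ℂ (LinearMap.ker (d0 : H0 →ₗ[ℂ] H1)) ∧
    FiniteDimensional ℂ
      (↥(LinearMap.ker (d1 : H1 →ₗ[ℂ] H2)) ⧸
        Submodule.comap (LinearMap.ker (d1 : H1 →ₗ[ℂ] H2)).subtype
          (LinearMap.range (d0 : H0 →ₗ[ℂ] H1))) ∧
    FiniteDimensional ℂ (H2 ⧸ LinearMap.range (d1 : H1 →ₗ[ℂ] H2)) ∧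
    IsFredholmOp D ∧
    (Module.finrank ℂ (LinearMap.ker (D : H1 →ₗ[ℂ] H0 × H2)) : ℤ)
        - (Module.finrank ℂ ((H0 × H2) ⧸ LinearMap.range (D : H1 →ₗ[ℂ] H0 × H2)) : ℤ)
      = -(Module.finrank ℂ (LinearMap.ker (d0 : H0 →ₗ[ℂ] H1)) : ℤ)
        + (Module.finrank ℂ
            (↥(LinearMap.ker (d1 : H1 →ₗ[ℂ] H2)) ⧸
              Submodule.comap (LinearMap.ker (d1 : H1 →ₗ[ℂ] H2)).subtype
                (LinearMap.range (d0 : H0 →ₗ[ℂ] H1))) : ℤ)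
        - (Module.finrank ℂ (H2 ⧸ LinearMap.range (d1 : H1 →ₗ[ℂ] H2)) : ℤ) := by
  obtain ⟨hk0, hc0, hq0⟩ := hd0
  obtain ⟨-, hc1, hq1⟩ := hd1
  subst hD
  have : CompleteSpace d0.range := hc0.completeSpace_coe
  have hR0 : d0.range ≤ d1.ker := by
    rintro _ ⟨x, rfl⟩
    exact congr($hcx x)
  have hkerD : (d0†.prod d1).ker = d0.rangeᗮ ⊓ d1.ker := by rw [ker_prod, orthogonal_range]
  have hrangeD := range_adjoint_prod_of_range_le_ker hR0 hc0
  let eH1 := (LinearEquiv.ofEq _ _ hkerD).trans (orthogonalInfEquivQuotientComap _ _ hR0)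
  let eCoker := (quotEquivOfEq _ _ hrangeD).trans <| (quotientProdEquiv _ _).trans <|
    (quotientEquivOfIsCompl _ _ d0.ker.isCompl_orthogonal.symm).prodCongr (.refl ℂ _)
  have : FiniteDimensional ℂ d0.rangeᗮ :=
    (quotientEquivOfIsCompl _ _ d0.range.isCompl_orthogonal).finiteDimensional
  have : FiniteDimensional ℂ (d0†.prod d1).ker := hkerD ▸ finiteDimensional_of_le inf_le_left
  refine ⟨hk0, eH1.finiteDimensional, hq1, ⟨‹_›, ?_, eCoker.symm.finiteDimensional⟩, ?_⟩
  · rw [hrangeD]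
    exact (isClosed_orthogonal _).prod hc1
  · rw [← eH1.finrank_eq, eCoker.finrank_eq, Module.finrank_prod]
    push_cast
    ring
end
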